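/- Let $m \geq 3$ and let $P_m$ be the vertex set of a regular $m$-gon inscribed in the unit circle with the geodesic metric. Suppose $X \subseteq P_m$ has more than one point, and $v_i, v_j \in X$ realize $\operatorname{diam} X$. If $\operatorname{diam} X < \frac{2\pi}{3} - \frac{2\pi}{3m}$, then every point of $X$ lies on the smaller arc of the circle connecting $v_i$ and $v_j$. -/
import Mathlib

open Real

-- helper: coe of toIcoMod
lemma coe_toIcoMod' {p : ℝ} (hp : 0 < p) (x : ℝ) :
    ((toIcoMod hp 0 x : ℝ) : AddCircle p) = (x : AddCircle p) := by
  rw [QuotientAddGroup.eq_iff_sub_mem]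
  have := self_sub_toIcoMod hp 0 x
  have : toIcoMod hp 0 x - x = (-(toIcoDiv hp 0 x)) • p := by
    rw [neg_smul, ← this]; ring
  rw [this]
  exact AddSubgroup.zsmul_mem_zmultiples p _

lemma norm_min {p : ℝ} (hp : 0 < p) {t : ℝ} (h0 : 0 ≤ t) (h1 : t ≤ p) :
    ‖(t : AddCircle p)‖ = min t (p - t) := by
  rcases le_total t (p / 2) with h | h
  · rw [min_eq_left (by linarith)]
    have := (AddCircle.norm_coe_eq_abs_iff p (x := t) hp.ne').2
      (by rw [abs_of_nonneg h0, abs_of_pos hp]; exact h)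
    rw [this, abs_of_nonneg h0]
  · rw [min_eq_right (by linarith)]
    have hc : ((t : ℝ) : AddCircle p) = ((t - p : ℝ) : AddCircle p) := by
      rw [QuotientAddGroup.eq_iff_sub_mem]
      have : (t : ℝ) - (t - p) = (1 : ℤ) • p := by simp
      rw [this]; exact AddSubgroup.zsmul_mem_zmultiples p _
    rw [hc]
    have := (AddCircle.norm_coe_eq_abs_iff p (x := t - p) hp.ne').2
      (by rw [abs_of_nonpos (by linarith), abs_of_pos hp]; linarith)
    rw [this, abs_of_nonpos (by linarith)]; ring

lemma dist_coe_eq {p : ℝ} (hp : 0 < p) {x y : ℝ} (hxy : x ≤ y) (h : y - x < p) :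
    dist (x : AddCircle p) (y : AddCircle p) = min (y - x) (p - (y - x)) := by
  rw [dist_comm, dist_eq_norm, ← QuotientAddGroup.mk_sub, norm_min hp (by linarith) (by linarith)]

lemma tri3 {p : ℝ} (hp : 0 < p) {x y z : ℝ} (hx : 0 ≤ x) (hxy : x ≤ y) (hyz : y ≤ z)
    (hz : z < p) :
    dist (x : AddCircle p) y + dist (y : AddCircle p) z = dist (x : AddCircle p) z ∨
    dist (x : AddCircle p) z + dist (y : AddCircle p) z = dist (x : AddCircle p) y ∨
    dist (x : AddCircle p) z + dist (x : AddCircle p) y = dist (y : AddCircle p) z ∨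
    dist (x : AddCircle p) y + dist (y : AddCircle p) z + dist (x : AddCircle p) z = p := by
  have hxz : x ≤ z := hxy.trans hyz
  have A := dist_coe_eq hp hxy (by linarith)
  have B := dist_coe_eq hp hyz (by linarith)
  have C := dist_coe_eq hp hxz (by linarith)
  set u := y - x with hu
  set v := z - y with hv
  have huv : z - x = u + v := by rw [hu, hv]; ring
  rw [huv] at C
  rcases le_total (u + v) (p / 2) with h1 | h1
  · left
    rw [A, B, C]; simp only [min_def]; split_ifs <;> linarith
  · rcases le_total u (p / 2) with h2 | h2
    · rcases le_total v (p / 2) with h3 | h3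
      · right; right; right
        rw [A, B, C]; simp only [min_def]; split_ifs <;> linarith
      · right; right; left
        rw [A, B, C]; simp only [min_def]; split_ifs <;> linarith
    · right; left
      rw [A, B, C]; simp only [min_def]; split_ifs <;> linarith

lemma key {p : ℝ} (hp : 0 < p) (a b c : AddCircle p) :
    dist a b + dist b c = dist a c ∨
    dist a c + dist b c = dist a b ∨
    dist a c + dist a b = dist b c ∨
    dist a b + dist b c + dist a c = p := by
  obtain ⟨a₀⟩ := a
  obtain ⟨b₀⟩ := b
  obtain ⟨c₀⟩ := c
  rw [show (Quot.mk _ a₀ : AddCircle p) = ((a₀ : ℝ) : AddCircle p) from rfl,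
    show (Quot.mk _ b₀ : AddCircle p) = ((b₀ : ℝ) : AddCircle p) from rfl,
    show (Quot.mk _ c₀ : AddCircle p) = ((c₀ : ℝ) : AddCircle p) from rfl,
    ← coe_toIcoMod' hp a₀, ← coe_toIcoMod' hp b₀, ← coe_toIcoMod' hp c₀]
  set x := toIcoMod hp 0 a₀ with hxd
  set y := toIcoMod hp 0 b₀ with hyd
  set z := toIcoMod hp 0 c₀ with hzd
  have hx := toIcoMod_mem_Ico' hp a₀
  have hy := toIcoMod_mem_Ico' hp b₀
  have hz := toIcoMod_mem_Ico' hp c₀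
  rw [Set.mem_Ico] at hx hy hz
  rcases le_total x y with h1 | h1 <;> rcases le_total y z with h2 | h2 <;>
    rcases le_total x z with h3 | h3 <;>
  · first
    | have H := tri3 hp hx.1 h1 h2 hz.2
    | have H := tri3 hp hx.1 h3 h2 hy.2
    | have H := tri3 hp hz.1 h3 h1 hy.2
    | have H := tri3 hp hy.1 h1 h3 hz.2
    | have H := tri3 hp hy.1 h2 h3 hx.2
    | have H := tri3 hp hz.1 h2 h1 hx.2
    rcases H with h | h | h | h <;>
    · first
      | (left; linarith [dist_comm ((x:ℝ) : AddCircle p) ((y:ℝ) : AddCircle p),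
          dist_comm ((y:ℝ) : AddCircle p) ((z:ℝ) : AddCircle p),
          dist_comm ((x:ℝ) : AddCircle p) ((z:ℝ) : AddCircle p)])
      | (right; left; linarith [dist_comm ((x:ℝ) : AddCircle p) ((y:ℝ) : AddCircle p),
          dist_comm ((y:ℝ) : AddCircle p) ((z:ℝ) : AddCircle p),
          dist_comm ((x:ℝ) : AddCircle p) ((z:ℝ) : AddCircle p)])
      | (right; right; left; linarith [dist_comm ((x:ℝ) : AddCircle p) ((y:ℝ) : AddCircle p),
          dist_comm ((y:ℝ) : AddCircle p) ((z:ℝ) : AddCircle p),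
          dist_comm ((x:ℝ) : AddCircle p) ((z:ℝ) : AddCircle p)])
      | (right; right; right; linarith [dist_comm ((x:ℝ) : AddCircle p) ((y:ℝ) : AddCircle p),
          dist_comm ((y:ℝ) : AddCircle p) ((z:ℝ) : AddCircle p),
          dist_comm ((x:ℝ) : AddCircle p) ((z:ℝ) : AddCircle p)])

/-- Vertex set of the regular `n`-gon inscribed in the unit circle, modeled inside
`AddCircle (2π)` whose quotient metric is exactly the geodesic metric
`d(α,β) = min (|α-β|) (2π - |α-β|)`. -/
noncomputable def Pvert (n : ℕ) : Set (AddCircle (2 * π)) :=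
  Set.range fun j : Fin n => ((2 * π * j / n : ℝ) : AddCircle (2 * π))

instance (n : ℕ) : Finite (Pvert n) := by unfold Pvert; exact (Set.finite_range _).to_subtype


/-- A point `z` of the circle lies on the smaller (geodesic) arc joining `a` and `b`
iff `dist a z + dist z b = dist a b`. -/
theorem stmt12 (m : ℕ) (hm : 3 ≤ m) (X : Set (Pvert m)) (hX : 1 < X.ncard)
    (vi vj : Pvert m) (hi : vi ∈ X) (hj : vj ∈ X)
    (hd : dist vi vj = Metric.diam X)
    (hlt : Metric.diam X < 2 * π / 3 - 2 * π / (3 * m)) :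
    ∀ z ∈ X, dist vi (z : Pvert m) + dist (z : Pvert m) vj = dist vi vj := by
  intro z hz
  have hp : (0 : ℝ) < 2 * π := by positivity
  have hbd : Bornology.IsBounded X := (Set.toFinite X).isBounded
  have h1 : dist vi (z : Pvert m) ≤ Metric.diam X := Metric.dist_le_diam_of_mem hbd hi hz
  have h2 : dist (z : Pvert m) vj ≤ Metric.diam X := Metric.dist_le_diam_of_mem hbd hz hj
  have hmpos : (0 : ℝ) < 3 * m := by positivity
  have hfrac : 0 < 2 * π / (3 * m) := by positivity
  have hDlt : Metric.diam X < 2 * π / 3 := by linarith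
  have hD0 : 0 ≤ Metric.diam X := Metric.diam_nonneg
  have e1 : dist vi (z : Pvert m) = dist (vi : AddCircle (2 * π)) (z : Pvert m) :=
    Subtype.dist_eq vi z
  have e2 : dist (z : Pvert m) vj = dist ((z : Pvert m) : AddCircle (2 * π)) (vj : AddCircle (2 * π)) :=
    Subtype.dist_eq _ vj
  have e3 : dist vi vj = dist (vi : AddCircle (2 * π)) (vj : AddCircle (2 * π)) :=
    Subtype.dist_eq vi vj
  rw [e1, e2, e3]
  rw [e1] at h1; rw [e2] at h2; rw [e3] at hd
  have H := key hp (vi : AddCircle (2 * π)) ((z : Pvert m) : AddCircle (2 * π))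
    (vj : AddCircle (2 * π))
  have t := dist_triangle (vi : AddCircle (2 * π)) ((z : Pvert m) : AddCircle (2 * π))
    (vj : AddCircle (2 * π))
  have n1 : (0:ℝ) ≤ dist (vi : AddCircle (2 * π)) ((z : Pvert m) : AddCircle (2 * π)) :=
    dist_nonneg
  have n2 : (0:ℝ) ≤ dist ((z : Pvert m) : AddCircle (2 * π)) (vj : AddCircle (2 * π)) :=
    dist_nonneg
  rcases H with h | h | h | h <;> linarith
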